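/- arXiv:2006.02988 — 3 statements merged into one kernel-verified Lean document; each statement's English description precedes it below -/
import Mathlib

section
/- Let G be a simple connected graph and H = H(G) its auxiliary graph (vertices of H are the edges of G; two edges e1, e2 of G are adjacent in H if some pair of vertices of G is separated by both e1 and e2). If an edge coloring f strongly rainbow connects G, then f is a proper coloring of the vertices of H. Consequently src(G) ≥ χ(H) ≥ ω(H). -/
/-
Two edges adjacent in `H(G)` both lie on every shortest path between some pair `u ≠ v`, in
particular on the rainbow shortest `(u,v)`-path that `f` provides, so they get distinct colours.
Hence every strongly rainbow connecting colouring is a proper colouring of `H(G)`, and an optimal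
one (which exists since an injective colouring works on a connected finite graph) bounds `χ(H)`.
-/

open SimpleGraph

variable {V : Type*} {C : Type*}

/-- A walk is a shortest path: it is a path whose length equals the distance
between its endpoints. -/
def IsShortestPath (G : SimpleGraph V) {u v : V} (p : G.Walk u v) : Prop :=
  p.IsPath ∧ p.length = G.dist u v

/-- A walk is rainbow w.r.t. an edge coloring `f` if all of its edges receive
pairwise distinct colors. -/
def IsRainbow {G : SimpleGraph V} (f : Sym2 V → C) {u v : V} (p : G.Walk u v) : Prop :=
  (p.edges.map f).Nodup

/-- An edge `e` separates the vertices `u` and `v` if `e` lies on every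
shortest `(u,v)`-path. -/
def EdgeSeparates (G : SimpleGraph V) (e : Sym2 V) (u v : V) : Prop :=
  ∀ p : G.Walk u v, IsShortestPath G p → e ∈ p.edges

/-- A vertex `w` separates the vertices `u` and `v` if `w` is an internal
vertex of every shortest `(u,v)`-path. -/
def VertexSeparates (G : SimpleGraph V) (w u v : V) : Prop :=
  w ≠ u ∧ w ≠ v ∧ ∀ p : G.Walk u v, IsShortestPath G p → w ∈ p.support

/-- The auxiliary graph `H(G)`: vertices are the edges of `G`, and two edges
are adjacent iff some pair of distinct vertices of `G` is separated by both. -/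
def auxGraph (G : SimpleGraph V) : SimpleGraph G.edgeSet where
  Adj e₁ e₂ := e₁ ≠ e₂ ∧
    ∃ u v : V, u ≠ v ∧ EdgeSeparates G e₁.1 u v ∧ EdgeSeparates G e₂.1 u v
  symm := ⟨by
    rintro e₁ e₂ ⟨hne, u, v, huv, h1, h2⟩
    exact ⟨hne.symm, u, v, huv, h2, h1⟩⟩
  loopless := ⟨by rintro e ⟨hne, -⟩; exact hne rfl⟩

/-- An edge coloring strongly rainbow connects `G` if every pair of distinct
vertices is joined by a rainbow shortest path. -/
def StronglyRainbowConnects (G : SimpleGraph V) (f : Sym2 V → C) : Prop :=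
  ∀ u v : V, u ≠ v → ∃ p : G.Walk u v, IsShortestPath G p ∧ IsRainbow f p

/-- An edge coloring rainbow connects `G` if every pair of distinct vertices
is joined by a rainbow path. -/
def RainbowConnects (G : SimpleGraph V) (f : Sym2 V → C) : Prop :=
  ∀ u v : V, u ≠ v → ∃ p : G.Walk u v, p.IsPath ∧ IsRainbow f p

/-- The strong rainbow connection number of `G`. -/
noncomputable def src (G : SimpleGraph V) : ℕ :=
  sInf {k : ℕ | ∃ f : Sym2 V → Fin k, StronglyRainbowConnects G f}

/-- The rainbow connection number of `G`. -/
noncomputable def rc (G : SimpleGraph V) : ℕ :=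
  sInf {k : ℕ | ∃ f : Sym2 V → Fin k, RainbowConnects G f}

variable {G : SimpleGraph V} {f : Sym2 V → C}

theorem StronglyRainbowConnects.ne_of_adj_auxGraph (hf : StronglyRainbowConnects G f)
    {e₁ e₂ : G.edgeSet} (h : (auxGraph G).Adj e₁ e₂) : f e₁.1 ≠ f e₂.1 := by
  obtain ⟨hne, u, v, huv, h₁, h₂⟩ := h
  obtain ⟨p, hp, hrainbow⟩ := hf u v huv
  exact fun heq => hne <| Subtype.ext <| List.inj_on_of_nodup_map hrainbow (h₁ p hp) (h₂ p hp) heq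

def StronglyRainbowConnects.coloringAuxGraph (hf : StronglyRainbowConnects G f) :
    (auxGraph G).Coloring C :=
  Coloring.mk (fun e => f e.1) hf.ne_of_adj_auxGraph

theorem SimpleGraph.Connected.stronglyRainbowConnects_of_injective (hG : G.Connected)
    (hf : Function.Injective f) : StronglyRainbowConnects G f := by
  intro u v _
  obtain ⟨p, hp, hlength⟩ := hG.exists_path_of_dist u v
  exact ⟨p, ⟨hp, hlength⟩, hp.edges_nodup.map hf⟩

theorem SimpleGraph.Connected.exists_stronglyRainbowConnects_fin_src [Finite V]
    (hG : G.Connected) : ∃ g : Sym2 V → Fin (src G), StronglyRainbowConnects G g := by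
  have : Fintype (Sym2 V) := Fintype.ofFinite _
  exact Nat.sInf_mem (s := {k | ∃ g : Sym2 V → Fin k, StronglyRainbowConnects G g})
    ⟨_, _, hG.stronglyRainbowConnects_of_injective (Fintype.equivFin (Sym2 V)).injective⟩

theorem SimpleGraph.Connected.chromaticNumber_auxGraph_le_src [Finite V] (hG : G.Connected) :
    (auxGraph G).chromaticNumber ≤ src G := by
  obtain ⟨g, hg⟩ := hG.exists_stronglyRainbowConnects_fin_src
  simpa using hg.coloringAuxGraph.colorable.chromaticNumber_le

/-- If `f` strongly rainbow connects `G`, then `f` is a proper coloring of the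
vertices of the auxiliary graph `H(G)`; consequently `src(G) ≥ χ(H) ≥ ω(H)`. -/
theorem stmt2 {V C : Type*} [Fintype V] (G : SimpleGraph V) (hG : G.Connected)
    (f : Sym2 V → C) (hf : StronglyRainbowConnects G f) :
    (∀ e₁ e₂ : G.edgeSet, (auxGraph G).Adj e₁ e₂ → f e₁.1 ≠ f e₂.1) ∧
    ((auxGraph G).cliqueNum : ℕ∞) ≤ (auxGraph G).chromaticNumber ∧
    (auxGraph G).chromaticNumber ≤ (src G : ℕ∞) :=
  ⟨fun _ _ => hf.ne_of_adj_auxGraph, cliqueNum_le_chromaticNumber,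
    hG.chromaticNumber_auxGraph_le_src⟩
end

section
/- Let G be the graph obtained as the union of k+1 copies of K_4 where consecutive copies share an edge (vertices of the i-th K_4 are v_{2(i-1)+1},...,v_{2(i-1)+4}, so copies i and i+1 share two vertices and the edge between them). Then diam(G) = k+1 and no pair of vertices of G is separated by any edge, so the auxiliary graph H(G) has no edges and ω(H(G)) = 1; hence diam(G) − ω(H(G)) = k. -/
open SimpleGraph

variable {V : Type*} {C : Type*}

/-- The chain of `k+1` copies of `K₄`, where the `i`-th copy (`0 ≤ i ≤ k`) is
induced on the vertices `2i, 2i+1, 2i+2, 2i+3`, so that consecutive copies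
share an edge. -/
def chainK4 (k : ℕ) : SimpleGraph (Fin (2 * k + 4)) where
  Adj a b := a ≠ b ∧ ∃ i : ℕ, i ≤ k ∧ 2 * i ≤ a.val ∧ a.val ≤ 2 * i + 3 ∧
      2 * i ≤ b.val ∧ b.val ≤ 2 * i + 3
  symm := ⟨by
    rintro a b ⟨h, i, hi, h1, h2, h3, h4⟩
    exact ⟨h.symm, i, hi, h3, h4, h1, h2⟩⟩
  loopless := ⟨by rintro a ⟨h, -⟩; exact h rfl⟩

/-! Consecutive vertices `2i, 2i+1` form the `i`-th rung of the chain, and two distinct vertices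
are adjacent exactly when their rungs differ by at most one. A walk moves at most one rung per
step, while for rungs `i + d = j` with `d ≥ 2` one can walk from a vertex on rung `i` to one on
rung `j` in `d` steps through only even, or through only odd, intermediate vertices. These two
shortest paths share no edge, so no edge separates a non-adjacent pair; an adjacent pair is
separated only by the edge joining it. Hence `H(G)` has no edges, and the extreme rungs give the
diameter. -/

section Separation

variable {G : SimpleGraph V}

lemma EdgeSeparates.symm {e : Sym2 V} {u v : V} (h : EdgeSeparates G e u v) :
    EdgeSeparates G e v u := by
  intro p hp
  have hrev : IsShortestPath G p.reverse :=
    ⟨hp.1.reverse, by rw [Walk.length_reverse, hp.2, dist_comm]⟩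
  simpa only [Walk.edges_reverse, List.mem_reverse] using h p.reverse hrev

lemma not_edgeSeparates_self (e : Sym2 V) (u : V) : ¬ EdgeSeparates G e u u := fun h =>
  List.not_mem_nil (h Walk.nil ⟨Walk.IsPath.nil, by simp⟩)

lemma EdgeSeparates.eq_of_adj {e : Sym2 V} {u v : V} (h : EdgeSeparates G e u v)
    (huv : G.Adj u v) : e = s(u, v) := by
  have hp : IsShortestPath G (Walk.cons huv Walk.nil) :=
    ⟨by simp [huv.ne], by simp [dist_eq_one_iff_adj.mpr huv]⟩
  simpa using h _ hp

lemma not_edgeSeparates_of_internallyDisjoint {u v : V} (huv : ¬ G.Adj u v)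
    {p q : G.Walk u v} (hp : IsShortestPath G p) (hq : IsShortestPath G q)
    (hpq : ∀ x ∈ p.support, x ∈ q.support → x = u ∨ x = v) (e : Sym2 V) :
    ¬ EdgeSeparates G e u v := by
  intro h
  induction e using Sym2.ind with
  | _ a b =>
    have hep := h p hp
    have heq := h q hq
    have hab : G.Adj a b := p.adj_of_mem_edges hep
    have ha := hpq a (p.fst_mem_support_of_mem_edges hep) (q.fst_mem_support_of_mem_edges heq)
    have hb := hpq b (p.snd_mem_support_of_mem_edges hep) (q.snd_mem_support_of_mem_edges heq)
    rcases ha with rfl | rfl <;> rcases hb with rfl | rfl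
    · exact hab.ne rfl
    · exact huv hab
    · exact huv hab.symm
    · exact hab.ne rfl

lemma auxGraph_eq_bot
    (h : ∀ u v : V, ¬ G.Adj u v → ∀ e : Sym2 V, ¬ EdgeSeparates G e u v) :
    auxGraph G = ⊥ := by
  ext e₁ e₂
  simp only [bot_adj, iff_false]
  rintro ⟨hne, u, v, -, h₁, h₂⟩
  by_cases huv : G.Adj u v
  · exact hne (Subtype.ext ((h₁.eq_of_adj huv).trans (h₂.eq_of_adj huv).symm))
  · exact h u v huv _ h₁

end Separation

lemma SimpleGraph.cliqueNum_bot {α : Type*} [Nonempty α] : (⊥ : SimpleGraph α).cliqueNum = 1 := by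
  have hsizes : {n | ∃ s, (⊥ : SimpleGraph α).IsNClique n s} = Set.Iic 1 := by
    ext n
    simp only [isNClique_bot_iff, Set.mem_Iic]
    refine ⟨fun ⟨_, hn, _⟩ => hn, fun hn => ?_⟩
    obtain ⟨a⟩ := ‹Nonempty α›
    interval_cases n
    · exact ⟨∅, zero_le_one, rfl⟩
    · exact ⟨{a}, le_rfl, rfl⟩
  rw [cliqueNum, hsizes, csSup_Iic]

namespace chainK4

variable {k : ℕ}

lemma adj_iff {u v : Fin (2 * k + 4)} :
    (chainK4 k).Adj u v ↔ u ≠ v ∧ u.val / 2 ≤ v.val / 2 + 1 ∧ v.val / 2 ≤ u.val / 2 + 1 := by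
  constructor
  · rintro ⟨h, i, -, h₁, h₂, h₃, h₄⟩
    exact ⟨h, by omega, by omega⟩
  · rintro ⟨h, h₁, h₂⟩
    have hu := u.isLt
    have hv := v.isLt
    exact ⟨h, min (min (u.val / 2) (v.val / 2)) k, by omega, by omega, by omega, by omega, by omega⟩

lemma div_two_le_add_length {u v : Fin (2 * k + 4)} (p : (chainK4 k).Walk u v) :
    v.val / 2 ≤ u.val / 2 + p.length := by
  induction p with
  | nil => simp
  | cons h _ ih =>
    rw [Walk.length_cons]
    obtain ⟨-, i, -, h₁, h₂, h₃, h₄⟩ := h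
    omega

lemma exists_walk_of_parity {t : ℕ} (ht : t < 2) {d : ℕ} (hd : 1 ≤ d) :
    ∀ {u v : Fin (2 * k + 4)}, u.val / 2 + d = v.val / 2 →
      ∃ p : (chainK4 k).Walk u v, p.length = d ∧
        ∀ x ∈ p.support, x = u ∨ x = v ∨ x.val % 2 = t := by
  induction d, hd using Nat.le_induction with
  | base =>
    intro u v h
    have huv : (chainK4 k).Adj u v := adj_iff.mpr ⟨Fin.ne_of_val_ne (by omega), by omega, by omega⟩
    refine ⟨Walk.cons huv Walk.nil, rfl, ?_⟩
    simp only [Walk.support_cons, Walk.support_nil, List.mem_cons, List.not_mem_nil, or_false]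
    rintro x (rfl | rfl) <;> simp
  | succ d _ ih =>
    intro u v h
    have hv := v.isLt
    let w : Fin (2 * k + 4) := ⟨2 * (u.val / 2) + 2 + t, by omega⟩
    have huw : (chainK4 k).Adj u w := adj_iff.mpr ⟨Fin.ne_of_val_ne (by simp [w]; omega),
      by simp [w]; omega, by simp [w]; omega⟩
    obtain ⟨p, hlen, hsupp⟩ := ih (u := w) (v := v) (by simp [w]; omega)
    refine ⟨Walk.cons huw p, by rw [Walk.length_cons, hlen], ?_⟩
    intro x hx
    rcases List.mem_cons.mp (Walk.support_cons huw p ▸ hx) with rfl | hx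
    · exact Or.inl rfl
    · rcases hsupp x hx with rfl | rfl | hx
      · exact Or.inr (Or.inr (by simp [w]; omega))
      · exact Or.inr (Or.inl rfl)
      · exact Or.inr (Or.inr hx)

lemma dist_eq {u v : Fin (2 * k + 4)} {d : ℕ} (hd : 1 ≤ d) (h : u.val / 2 + d = v.val / 2) :
    (chainK4 k).dist u v = d := by
  obtain ⟨p, hlen, -⟩ := exists_walk_of_parity zero_lt_two hd h
  obtain ⟨q, hq⟩ := p.reachable.exists_walk_length_eq_dist
  have := div_two_le_add_length q
  have := dist_le p
  omega

lemma not_edgeSeparates_of_lt {u v : Fin (2 * k + 4)} (h : u.val / 2 + 2 ≤ v.val / 2)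
    (e : Sym2 (Fin (2 * k + 4))) : ¬ EdgeSeparates (chainK4 k) e u v := by
  have hd : u.val / 2 + (v.val / 2 - u.val / 2) = v.val / 2 := by omega
  obtain ⟨p, hp, hpsupp⟩ := exists_walk_of_parity zero_lt_two (by omega) hd
  obtain ⟨q, hq, hqsupp⟩ := exists_walk_of_parity one_lt_two (by omega) hd
  have hdist := dist_eq (by omega) hd
  have shortest {r : (chainK4 k).Walk u v} (hr : r.length = v.val / 2 - u.val / 2) :
      IsShortestPath (chainK4 k) r :=
    ⟨r.isPath_of_length_eq_dist (hr.trans hdist.symm), hr.trans hdist.symm⟩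
  refine not_edgeSeparates_of_internallyDisjoint (fun huv => ?_) (shortest hp) (shortest hq)
    (fun x hxp hxq => ?_) e
  · have := adj_iff.mp huv
    omega
  · rcases hpsupp x hxp with hx | hx | hx
    · exact Or.inl hx
    · exact Or.inr hx
    · rcases hqsupp x hxq with hx' | hx' | hx'
      · exact Or.inl hx'
      · exact Or.inr hx'
      · omega

lemma not_edgeSeparates {u v : Fin (2 * k + 4)} (huv : ¬ (chainK4 k).Adj u v)
    (e : Sym2 (Fin (2 * k + 4))) : ¬ EdgeSeparates (chainK4 k) e u v := by
  rcases eq_or_ne u v with rfl | hne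
  · exact not_edgeSeparates_self e u
  · have hfar : u.val / 2 + 2 ≤ v.val / 2 ∨ v.val / 2 + 2 ≤ u.val / 2 := by
      rw [adj_iff] at huv
      omega
    rcases hfar with hfar | hfar
    · exact not_edgeSeparates_of_lt hfar e
    · exact fun h => not_edgeSeparates_of_lt hfar e h.symm

lemma edist_le {u v : Fin (2 * k + 4)} (h : u.val / 2 ≤ v.val / 2) :
    (chainK4 k).edist u v ≤ k + 1 := by
  have hv := v.isLt
  by_cases hfar : u.val / 2 + 1 ≤ v.val / 2
  · obtain ⟨p, hlen, -⟩ := exists_walk_of_parity zero_lt_two (by omega)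
      (by omega : u.val / 2 + (v.val / 2 - u.val / 2) = v.val / 2)
    exact (Walk.edist_le p).trans (by rw [hlen]; exact_mod_cast (by omega))
  · have : (chainK4 k).edist u v ≤ 1 := by
      rw [edist_le_one_iff_adj_or_eq, adj_iff]
      by_cases huv : u = v
      · exact Or.inr huv
      · exact Or.inl ⟨huv, by omega, by omega⟩
    exact this.trans (by exact_mod_cast (by omega))

lemma ediam_eq : (chainK4 k).ediam = k + 1 := by
  refine le_antisymm (ediam_le_of_edist_le fun u v => ?_) ?_
  · rcases le_total (u.val / 2) (v.val / 2) with h | h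
    · exact edist_le h
    · exact edist_comm ▸ edist_le h
  · let first : Fin (2 * k + 4) := ⟨0, by omega⟩
    let last : Fin (2 * k + 4) := ⟨2 * k + 3, by omega⟩
    have hd : first.val / 2 + (k + 1) = last.val / 2 := by simp [first, last]; omega
    obtain ⟨p, -⟩ := exists_walk_of_parity zero_lt_two (by omega) hd
    calc ((k + 1 : ℕ) : ℕ∞) = (chainK4 k).dist first last := by rw [dist_eq (by omega) hd]
      _ = (chainK4 k).edist first last := p.reachable.coe_dist_eq_edist
      _ ≤ (chainK4 k).ediam := edist_le_ediam

lemma diam_eq : (chainK4 k).diam = k + 1 := by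
  rw [diam, ediam_eq]
  rfl

instance : Nonempty (chainK4 k).edgeSet :=
  ⟨⟨s(⟨0, by omega⟩, ⟨1, by omega⟩), adj_iff.mpr ⟨by simp, by simp, by simp⟩⟩⟩

end chainK4

/-- For the chain of `k+1` copies of `K₄`: the diameter is `k+1`, no pair of
(non-adjacent) vertices is separated by any edge, the auxiliary graph has no
edges so `ω(H(G)) = 1`, and hence `diam(G) − ω(H(G)) = k`. -/
theorem stmt8 (k : ℕ) :
    (chainK4 k).diam = k + 1 ∧
    (∀ u v : Fin (2 * k + 4), ¬ (chainK4 k).Adj u v →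
      ∀ e : Sym2 (Fin (2 * k + 4)), ¬ EdgeSeparates (chainK4 k) e u v) ∧
    auxGraph (chainK4 k) = ⊥ ∧
    (auxGraph (chainK4 k)).cliqueNum = 1 ∧
    (chainK4 k).diam - (auxGraph (chainK4 k)).cliqueNum = k := by
  have hsep : ∀ u v, ¬ (chainK4 k).Adj u v → ∀ e, ¬ EdgeSeparates (chainK4 k) e u v :=
    fun _ _ => chainK4.not_edgeSeparates
  have hbot : auxGraph (chainK4 k) = ⊥ := auxGraph_eq_bot hsep
  have hω : (auxGraph (chainK4 k)).cliqueNum = 1 := by rw [hbot, cliqueNum_bot]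
  refine ⟨chainK4.diam_eq, hsep, hbot, hω, ?_⟩
  rw [chainK4.diam_eq, hω, Nat.add_sub_cancel]
end

section
/- Let G be a simple connected graph with distinct vertices u, v, and let D_{uv} be the union of all shortest (u,v)-paths directed from u to v. A vertex w (w ≠ u, v) separates u and v in G if and only if there is no directed (u,v)-path in D_{uv} − w (D_{uv} with w and its incident edges removed). -/
open SimpleGraph

variable {V : Type*} {C : Type*}

/-!
Every arc `(a, b)` of `D_{uv}` lies on a shortest `(u,v)`-walk, so it raises the distance from `u`
by exactly one. Hence a directed `(u,v)`-path in `D_{uv} − w` is itself a walk of length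
`dist u v`, i.e. a shortest `(u,v)`-path avoiding `w`; conversely a shortest path avoiding `w`
is a directed path of `D_{uv} − w`.
-/

namespace SimpleGraph

variable {G : SimpleGraph V}

lemma Walk.dist_snd_eq_dist_fst_add_one {u v : V} {p : G.Walk u v}
    (hp : p.length = G.dist u v) {d : G.Dart} (hd : d ∈ p.darts) :
    G.dist u d.snd = G.dist u d.fst + 1 := by
  obtain ⟨ru, rv, rfl⟩ := p.isSubwalk_toWalk_adj_iff_mem_darts.2 hd
  have hsnd := length_eq_dist_of_subwalk hp (Walk.isSubwalk_of_append_left rfl)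
  have hfst := length_eq_dist_of_subwalk hsnd (Walk.isSubwalk_of_append_left rfl)
  simp only [Walk.length_append, Walk.length_cons, Walk.length_nil] at hsnd
  omega

lemma Walk.reflTransGen_of_forall_mem_darts {r : V → V → Prop} :
    ∀ {a b : V} (q : G.Walk a b), (∀ d ∈ q.darts, r d.fst d.snd) →
      Relation.ReflTransGen r a b
  | _, _, .nil, _ => .refl
  | _, _, .cons _ q, hq =>
    .head (hq _ List.mem_cons_self)
      (q.reflTransGen_of_forall_mem_darts fun d hd => hq d (List.mem_cons_of_mem _ hd))

lemma exists_walk_length_eq_dist_of_reflTransGen {r : V → V → Prop} {u b w : V}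
    (hr : ∀ a c, r a c → G.Adj a c ∧ G.dist u c = G.dist u a + 1 ∧ c ≠ w) (hwu : w ≠ u)
    (h : Relation.ReflTransGen r u b) :
    ∃ q : G.Walk u b, q.length = G.dist u b ∧ w ∉ q.support := by
  induction h with
  | refl => exact ⟨.nil, by simp, by simpa using hwu⟩
  | tail _ hbc ih =>
    obtain ⟨q, hq, hwq⟩ := ih
    obtain ⟨hadj, hdist, hcw⟩ := hr _ _ hbc
    refine ⟨q.concat hadj, by rw [Walk.length_concat, hq, hdist], ?_⟩
    simpa [Walk.support_concat, hwq] using hcw.symm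

end SimpleGraph

theorem stmt14_general {V : Type*} (G : SimpleGraph V)
    {u v : V} (w : V) (hwu : w ≠ u) (hwv : w ≠ v) :
    VertexSeparates G w u v ↔
      ¬ Relation.ReflTransGen
          (fun a b =>
            (∃ p : G.Walk u v, IsShortestPath G p ∧
              ∃ d ∈ p.darts, d.toProd = (a, b)) ∧
            a ≠ w ∧ b ≠ w) u v := by
  constructor
  · rintro ⟨-, -, hsep⟩ hpath
    have harc : ∀ a c, ((∃ p : G.Walk u v, IsShortestPath G p ∧
        ∃ d ∈ p.darts, d.toProd = (a, c)) ∧ a ≠ w ∧ c ≠ w) →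
          G.Adj a c ∧ G.dist u c = G.dist u a + 1 ∧ c ≠ w := by
      rintro a c ⟨⟨p, hp, d, hd, hdp⟩, -, hcw⟩
      obtain ⟨rfl, rfl⟩ := Prod.ext_iff.mp hdp
      exact ⟨d.adj, p.dist_snd_eq_dist_fst_add_one hp.2 hd, hcw⟩
    obtain ⟨q, hq, hwq⟩ := exists_walk_length_eq_dist_of_reflTransGen harc hwu hpath
    exact hwq (hsep q ⟨q.isPath_of_length_eq_dist hq, hq⟩)
  · refine fun hno => ⟨hwu, hwv, fun p hp => by_contra fun hwp => hno ?_⟩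
    refine p.reflTransGen_of_forall_mem_darts fun d hd => ⟨⟨p, hp, d, hd, rfl⟩, ?_, ?_⟩
    · exact fun h => hwp (h ▸ p.dart_fst_mem_support_of_mem_darts hd)
    · exact fun h => hwp (h ▸ p.dart_snd_mem_support_of_mem_darts hd)

/-- A vertex `w ∉ {u,v}` separates `u` and `v` iff there is no directed
`(u,v)`-path in `D_{uv} − w`, where `D_{uv}` is the union of all shortest
`(u,v)`-paths directed from `u` to `v`. -/
theorem stmt14 {V : Type*} (G : SimpleGraph V) (hG : G.Connected)
    {u v : V} (huv : u ≠ v) (w : V) (hwu : w ≠ u) (hwv : w ≠ v) :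
    VertexSeparates G w u v ↔
      ¬ Relation.ReflTransGen
          (fun a b =>
            (∃ p : G.Walk u v, IsShortestPath G p ∧
              ∃ d ∈ p.darts, d.toProd = (a, b)) ∧
            a ≠ w ∧ b ≠ w) u v :=
  stmt14_general G w hwu hwv
end
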